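/- Let m, n ∈ ℂ with m, n ∉ {1, −1} and m ≠ n, and for p ∈ ℂ set μ_p = (m²p − mp − n² − n, m²p − 2mp + n² + 2n + p + 1, −mp − n + p − 1) ∈ ℂ³. Then for all p ≠ q in ℂ, the vectors μ_p and μ_q are linearly independent over ℂ. (Hence p ↦ [μ_p] is an injection of the exceptional fibre into the pencil of lines through the point MQ ∩ NP, completing the (2,2,1,1) case proposition.) -/
import Mathlib


/-- `μ_p`, the limiting Pascal line of the array `[A B C; F E D]` when
`A = B = M = τ m` and `E = F = N = τ n` along the blow-up direction `p`, with
`C = P = τ 1`, `D = Q = τ(-1)`. -/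
def mu (m n p : ℂ) : Fin 3 → ℂ :=
  ![m ^ 2 * p - m * p - n ^ 2 - n,
    m ^ 2 * p - 2 * m * p + n ^ 2 + 2 * n + p + 1,
    -(m * p) - n + p - 1]

/-- The `(2,2,1,1)` case: if `M = τ m`, `N = τ n`, `P = τ 1`, `Q = τ(-1)` are pairwise
distinct points of the conic, then distinct blow-up directions `p ≠ q` give
projectively distinct limiting Pascal lines `μ_p`, `μ_q`; hence `p ↦ [μ_p]` is an
injection of the exceptional fibre into the pencil of lines through `MQ ∩ NP`. -/
theorem pascal_2211_injective (m n : ℂ)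
    (hm : m ∉ ({1, -1} : Set ℂ)) (hn : n ∉ ({1, -1} : Set ℂ)) (hmn : m ≠ n) :
    ∀ p q : ℂ, p ≠ q → LinearIndependent ℂ ![mu m n p, mu m n q] := by
  simp only [Set.mem_insert_iff, Set.mem_singleton_iff, not_or] at hm hn
  have hm1 : m - 1 ≠ 0 := sub_ne_zero.mpr hm.1
  have hn1 : n + 1 ≠ 0 := fun h => hn.2 (by linear_combination h)
  intro p q hpq
  rw [LinearIndependent.pair_iff]
  intro s t h
  have h0 := congrFun h 0
  have h1 := congrFun h 1
  have h2 := congrFun h 2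
  simp only [mu, Pi.add_apply, Pi.smul_apply, smul_eq_mul, Matrix.cons_val_zero,
    Matrix.cons_val_one, Matrix.head_cons, Matrix.cons_val_two, Matrix.tail_cons,
    Pi.zero_apply] at h0 h1 h2
  have hA : (s + t) * (n + 1) * (n + 2 - m) = 0 := by linear_combination h1 + (m - 1) * h2
  have hB : (s + t) * (n + 1) * (m + n) = 0 := by linear_combination -h0 - m * h2
  have hu2 : (s + t) * ((n + 1) ^ 2 * 2) = 0 := by linear_combination hA + hB
  have hu : s + t = 0 :=
    (mul_eq_zero.mp hu2).resolve_right (mul_ne_zero (pow_ne_zero _ hn1) two_ne_zero)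
  have hv2 : (s * p + t * q) * (m - 1) = 0 := by linear_combination -h2 - (n + 1) * hu
  have hv : s * p + t * q = 0 := (mul_eq_zero.mp hv2).resolve_right hm1
  have hs2 : s * (p - q) = 0 := by linear_combination hv - q * hu
  have hs : s = 0 := (mul_eq_zero.mp hs2).resolve_right (sub_ne_zero.mpr hpq)
  refine ⟨hs, ?_⟩
  linear_combination hu - hs
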